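/- Asymptotic expansion of the Laplace double-layer operator (Lemma 3.2): for μ ∈ C²(𝕋), the operator K^L[μ](s) = ∫_{0}^{2π} K^L(s,t;ε) μ(t) dt satisfies K^L[μ](s) = -(1/2) μ(π-s) - (ε/(2π)) ∫_{-π}^{π} E_{π-s}[μ](t) dt + o(ε) as ε → 0⁺, uniformly in s. -/

import Mathlib

open Real MeasureTheory

/-!
Put `x = π - s` and `D_ε(u) = 1 + ε² - (1 - ε²) cos u`. Periodicity turns the operator into
`-(ε / 2π) ∫_{-π}^{π} μ(x + u) / D_ε(u) du`. Since `D_ε` is even we may replace `μ(x + u)` by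
`(μ(x + u) + μ(x - u)) / 2 = μ(x) + (1 - cos u) E_x[μ](u)`, and then
`D_ε(u) = (1 - cos u) + ε² (1 + cos u)` together with `∫ 1 / D_ε = π / ε` gives the exact identity
`K^L[μ](s) = -μ(x) / 2 - (ε / 2π) ∫ E_x[μ] + (ε³ / 2π) ∫ (1 + cos u) / D_ε(u) · E_x[μ](u) du`.
As `1 - cos u ≥ 2u² / π²` on `[-π, π]`, `E_x[μ]` is bounded by `π² ‖μ''‖_∞ / 2` there, so the last
term is `O(ε²)` uniformly in `s`.
-/

-- `(1 + ε)² / 2` times the Poisson-kernel denominator `1 - 2r cos u + r²`, `r = (1 - ε) / (1 + ε)`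
noncomputable def poissonDenom (ε u : ℝ) : ℝ := 1 + ε ^ 2 - (1 - ε ^ 2) * cos u

lemma poissonDenom_eq (ε u : ℝ) :
    poissonDenom ε u = (1 - cos u) + ε ^ 2 * (1 + cos u) := by
  unfold poissonDenom; ring

lemma poissonDenom_pos {ε : ℝ} (hε : ε ≠ 0) (u : ℝ) : 0 < poissonDenom ε u := by
  rw [poissonDenom_eq]
  have hε2 : 0 < ε ^ 2 := by positivity
  rcases le_total (ε ^ 2) 1 with h | h <;>
    nlinarith [cos_le_one u, neg_one_le_cos u]

@[fun_prop]
lemma continuous_poissonDenom (ε : ℝ) : Continuous (poissonDenom ε) := by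
  unfold poissonDenom; fun_prop

lemma poissonDenom_neg (ε u : ℝ) : poissonDenom ε (-u) = poissonDenom ε u := by
  simp [poissonDenom]

-- `arctan (ε⁻¹ tan (u / 2)) - u / 2`, written without the poles of `tan`
lemma hasDerivAt_poissonDenom_antideriv {ε : ℝ} (hε : 0 < ε) (u : ℝ) :
    HasDerivAt (fun u => u / (2 * ε) +
        arctan ((1 - ε) * sin u / (1 + ε - (1 - ε) * cos u)) / ε)
      (poissonDenom ε u)⁻¹ u := by
  have hq : 0 < 1 + ε - (1 - ε) * cos u := by
    rcases le_total ε 1 with h | h <;>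
      nlinarith [cos_le_one u, neg_one_le_cos u]
  have hD := poissonDenom_pos hε.ne' u
  have hg : HasDerivAt (fun u => (1 - ε) * sin u / (1 + ε - (1 - ε) * cos u))
      (((1 - ε) * cos u * (1 + ε - (1 - ε) * cos u) - (1 - ε) * sin u * ((1 - ε) * sin u))
        / (1 + ε - (1 - ε) * cos u) ^ 2) u := by
    refine ((hasDerivAt_sin u).const_mul _).div ?_ hq.ne'
    simpa using ((hasDerivAt_cos u).const_mul (1 - ε)).const_sub (1 + ε)
  refine (((hasDerivAt_id u).div_const (2 * ε)).add (hg.arctan.div_const ε)).congr_deriv ?_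
  have hsq : 1 + ((1 - ε) * sin u / (1 + ε - (1 - ε) * cos u)) ^ 2
      = 2 * poissonDenom ε u / (1 + ε - (1 - ε) * cos u) ^ 2 := by
    rw [poissonDenom]
    field_simp
    linear_combination (1 - ε) ^ 2 * sin_sq_add_cos_sq u
  rw [hsq]
  field_simp
  rw [poissonDenom]
  linear_combination -(1 - ε) ^ 2 * sin_sq_add_cos_sq u

lemma integral_inv_poissonDenom {ε : ℝ} (hε : 0 < ε) :
    ∫ u in (-π)..π, (poissonDenom ε u)⁻¹ = π / ε := by
  rw [intervalIntegral.integral_eq_sub_of_hasDerivAt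
    (fun u _ => hasDerivAt_poissonDenom_antideriv hε u)
    (((continuous_poissonDenom ε).inv₀ fun u => (poissonDenom_pos hε.ne' u).ne').intervalIntegrable
      _ _)]
  simp only [sin_pi, sin_neg, neg_zero, mul_zero, zero_div, arctan_zero]
  ring

lemma Function.Periodic.deriv {f : ℝ → ℝ} {c : ℝ} (hf : Function.Periodic f c) :
    Function.Periodic (deriv f) c := fun x => by
  rw [← deriv_comp_add_const, funext hf]

lemma abs_sub_two_mul_add_le {f : ℝ → ℝ} {C : ℝ} (hf : Differentiable ℝ f)
    (hf' : Differentiable ℝ (deriv f)) (hC : ∀ y, |deriv (deriv f) y| ≤ C) (x u : ℝ) :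
    |f (x + u) - 2 * f x + f (x - u)| ≤ 2 * C * u ^ 2 := by
  have lip : ∀ a b, |deriv f a - deriv f b| ≤ C * |a - b| := fun a b =>
    convex_univ.norm_image_sub_le_of_norm_deriv_le (fun y _ => hf' y) (fun y _ => hC y)
      (Set.mem_univ b) (Set.mem_univ a)
  have hg : ∀ v, HasDerivAt (fun w => f (x + w) + f (x - w))
      (deriv f (x + v) - deriv f (x - v)) v := fun v =>
    ((hf _).hasDerivAt.comp_const_add x v).add ((hf _).hasDerivAt.comp_const_sub x v)
  have bound : ∀ v ∈ Set.uIcc 0 u, ‖deriv f (x + v) - deriv f (x - v)‖ ≤ 2 * C * |u| := by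
    intro v hv
    have hvu : |v| ≤ |u| := by simpa using Set.abs_sub_left_of_mem_uIcc hv
    have hC0 : 0 ≤ C := (abs_nonneg _).trans (hC 0)
    calc ‖deriv f (x + v) - deriv f (x - v)‖ ≤ C * |x + v - (x - v)| := lip _ _
      _ = 2 * C * |v| := by rw [show x + v - (x - v) = 2 * v by ring, abs_mul, abs_two]; ring
      _ ≤ 2 * C * |u| := by gcongr
  have := Convex.norm_image_sub_le_of_norm_hasDerivWithin_le
    (fun v _ => (hg v).hasDerivWithinAt) bound (convex_uIcc 0 u) Set.left_mem_uIcc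
    Set.right_mem_uIcc
  simp only [add_zero, sub_zero, Real.norm_eq_abs] at this
  calc |f (x + u) - 2 * f x + f (x - u)| = |f (x + u) + f (x - u) - (f x + f x)| := by
        congr 1; ring
    _ ≤ 2 * C * |u| * |u| := this
    _ = 2 * C * u ^ 2 := by rw [mul_assoc, abs_mul_abs_self]; ring

-- Lean's `a / 0 = 0` gives `0` at `t ∈ 2πℤ`, where the paper sets `E_x[f](t) = f''(x)`.
noncomputable def secondDiffQuot (f : ℝ → ℝ) (x t : ℝ) : ℝ :=
  (f (x + t) - 2 * f x + f (x - t)) / (2 * (1 - cos t))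

lemma sub_two_mul_add_eq_secondDiffQuot (f : ℝ → ℝ) (x : ℝ) {t : ℝ} (ht : |t| < 2 * π) :
    f (x + t) - 2 * f x + f (x - t) = 2 * (1 - cos t) * secondDiffQuot f x t := by
  obtain ⟨ht₁, ht₂⟩ := abs_lt.mp ht
  by_cases h : cos t = 1
  · obtain rfl := (cos_eq_one_iff_of_lt_of_lt ht₁ ht₂).mp h
    rw [cos_zero, sub_self, mul_zero, zero_mul, add_zero, sub_zero]
    ring
  · have : 1 - cos t ≠ 0 := sub_ne_zero.mpr (Ne.symm h)
    rw [secondDiffQuot]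
    field_simp

lemma abs_secondDiffQuot_le {f : ℝ → ℝ} {C : ℝ} (hf : Differentiable ℝ f)
    (hf' : Differentiable ℝ (deriv f)) (hC : ∀ y, |deriv (deriv f) y| ≤ C) (x : ℝ) {t : ℝ}
    (ht : |t| ≤ π) : |secondDiffQuot f x t| ≤ C * π ^ 2 / 2 := by
  have hC0 : 0 ≤ C := (abs_nonneg _).trans (hC 0)
  rcases eq_or_ne t 0 with rfl | ht0
  · rw [secondDiffQuot, cos_zero, sub_self, mul_zero, div_zero, abs_zero]
    positivity
  have hcos : 2 * t ^ 2 / π ^ 2 ≤ 1 - cos t := by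
    have := cos_le_one_sub_mul_cos_sq ht
    rw [div_mul_eq_mul_div] at this
    linarith
  have ht2 : 0 < t ^ 2 := by positivity
  have hpos : 0 < 2 * (1 - cos t) := by
    have : 0 < 2 * t ^ 2 / π ^ 2 := by positivity
    linarith
  rw [secondDiffQuot, abs_div, abs_of_pos hpos, div_le_iff₀ hpos]
  calc |f (x + t) - 2 * f x + f (x - t)| ≤ 2 * C * t ^ 2 :=
        abs_sub_two_mul_add_le hf hf' hC x t
    _ = C * π ^ 2 / 2 * (2 * (2 * t ^ 2 / π ^ 2)) := by field_simp
    _ ≤ C * π ^ 2 / 2 * (2 * (1 - cos t)) := by gcongr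

lemma intervalIntegrable_secondDiffQuot {f : ℝ → ℝ} {C : ℝ} (hf : Differentiable ℝ f)
    (hf' : Differentiable ℝ (deriv f)) (hC : ∀ y, |deriv (deriv f) y| ≤ C) (x : ℝ) :
    IntervalIntegrable (secondDiffQuot f x) volume (-π) π := by
  have hmeas : Measurable (secondDiffQuot f x) := by
    unfold secondDiffQuot
    have := hf.continuous
    exact Measurable.div (by fun_prop) (by fun_prop)
  refine (intervalIntegrable_const (c := C * π ^ 2 / 2)).mono_fun' hmeas.aestronglyMeasurable
    (ae_restrict_of_forall_mem measurableSet_uIoc fun t ht => ?_)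
  rw [Set.uIoc_of_le (by linarith [pi_pos])] at ht
  exact abs_secondDiffQuot_le hf hf' hC x (abs_le.mpr ⟨ht.1.le, ht.2⟩)

lemma integral_div_poissonDenom_eq {f : ℝ → ℝ} (hf : Continuous f) {ε : ℝ} (hε : 0 < ε)
    (x : ℝ) (hq : IntervalIntegrable (secondDiffQuot f x) volume (-π) π) :
    ∫ u in (-π)..π, f (x + u) / poissonDenom ε u =
      π / ε * f x + (∫ u in (-π)..π, secondDiffQuot f x u)
        - ε ^ 2 * ∫ u in (-π)..π, (1 + cos u) / poissonDenom ε u * secondDiffQuot f x u := by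
  have hD : ∀ u, poissonDenom ε u ≠ 0 := fun u => (poissonDenom_pos hε.ne' u).ne'
  have hDc := continuous_poissonDenom ε
  have heven : ∫ u in (-π)..π, f (x + u) / poissonDenom ε u
      = ∫ u in (-π)..π, f (x - u) / poissonDenom ε u := by
    simpa [poissonDenom_neg, sub_eq_add_neg] using
      (intervalIntegral.integral_comp_neg (a := -π) (b := π)
        fun u => f (x + u) / poissonDenom ε u).symm
  have hsplit : ∀ u ∈ Set.uIcc (-π) π,
      f (x + u) / poissonDenom ε u + f (x - u) / poissonDenom ε u
        = 2 * (f x * (poissonDenom ε u)⁻¹ + secondDiffQuot f x u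
          - ε ^ 2 * ((1 + cos u) / poissonDenom ε u * secondDiffQuot f x u)) := by
    intro u hu
    have hu' : |u| < 2 * π := by
      rw [Set.uIcc_of_le (by linarith [pi_pos])] at hu
      exact (abs_le.mpr hu).trans_lt (by linarith [pi_pos])
    have h2 := sub_two_mul_add_eq_secondDiffQuot f x hu'
    have h3 := poissonDenom_eq ε u
    have := hD u
    field_simp
    linear_combination h2 - 2 * secondDiffQuot f x u * h3
  have i₁ : IntervalIntegrable (fun u => f x * (poissonDenom ε u)⁻¹) volume (-π) π :=
    (continuous_const.mul (hDc.inv₀ hD)).intervalIntegrable _ _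
  have i₂ : IntervalIntegrable
      (fun u => (1 + cos u) / poissonDenom ε u * secondDiffQuot f x u) volume (-π) π :=
    hq.continuousOn_mul (Continuous.continuousOn (by fun_prop (disch := exact hD)))
  have i₃ : ∀ g : ℝ → ℝ, Continuous g →
      IntervalIntegrable (fun u => g u / poissonDenom ε u) volume (-π) π := fun g hg =>
    (hg.div hDc hD).intervalIntegrable _ _
  have hsum := intervalIntegral.integral_congr (μ := volume) hsplit
  rw [intervalIntegral.integral_add (i₃ _ (by fun_prop)) (i₃ _ (by fun_prop)), ← heven,
    intervalIntegral.integral_const_mul, intervalIntegral.integral_sub (i₁.add hq)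
      (i₂.const_mul _), intervalIntegral.integral_add i₁ hq,
    intervalIntegral.integral_const_mul, intervalIntegral.integral_const_mul,
    integral_inv_poissonDenom hε] at hsum
  linarith

lemma integral_laplaceKernel_mul_eq {μ : ℝ → ℝ} (hper : Function.Periodic μ (2 * π))
    (ε s : ℝ) :
    ∫ t in (0:ℝ)..(2 * π),
        (-(1 / (2 * π)) * ε / (1 + ε ^ 2 + (1 - ε ^ 2) * cos (s + t))) * μ t
      = -(ε / (2 * π)) * ∫ u in (-π)..π, μ (π - s + u) / poissonDenom ε u := by
  set x := π - s
  set g : ℝ → ℝ := fun u => μ (x + u) / poissonDenom ε u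
  have hg : Function.Periodic g (2 * π) := fun u => by
    simp only [g, poissonDenom, ← add_assoc, hper (x + u), cos_add_two_pi]
  have hkernel : ∀ t, -(1 / (2 * π)) * ε / (1 + ε ^ 2 + (1 - ε ^ 2) * cos (s + t)) * μ t
      = -(ε / (2 * π)) * g (t - x) := fun t => by
    simp only [g, poissonDenom, add_sub_cancel, show s + t = t - x + π by ring, cos_add_pi]
    ring
  simp_rw [hkernel]
  rw [intervalIntegral.integral_const_mul, intervalIntegral.integral_comp_sub_right,
    show 2 * π - x = 0 - x + 2 * π by ring, hg.intervalIntegral_add_eq (0 - x) (-π),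
    show -π + 2 * π = π by ring]

lemma intervalIntegral_congr_of_cos_ne_one {f g : ℝ → ℝ} (h : ∀ t, cos t ≠ 1 → f t = g t)
    (a b : ℝ) : ∫ t in a..b, f t = ∫ t in a..b, g t := by
  have hcount : {t : ℝ | cos t = 1}.Countable :=
    (Set.countable_range fun n : ℤ => (n : ℝ) * (2 * π)).mono fun t ht =>
      (cos_eq_one_iff t).mp ht
  refine intervalIntegral.integral_congr_ae ((hcount.ae_notMem volume).mono fun t ht _ => ?_)
  exact h t ht

lemma abs_integral_one_add_cos_div_poissonDenom_mul_le {g : ℝ → ℝ} {B ε : ℝ} (hε : 0 < ε)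
    (hg : ∀ u ∈ Set.Icc (-π) π, |g u| ≤ B) :
    |∫ u in (-π)..π, (1 + cos u) / poissonDenom ε u * g u| ≤ 2 * B * π / ε := by
  have hD : ∀ u, 0 < poissonDenom ε u := poissonDenom_pos hε.ne'
  have hbound : ∀ u ∈ Set.Ioc (-π) π,
      ‖(1 + cos u) / poissonDenom ε u * g u‖ ≤ 2 * B * (poissonDenom ε u)⁻¹ := by
    intro u hu
    have hB : 0 ≤ B := (abs_nonneg _).trans (hg u (Set.Ioc_subset_Icc_self hu))
    rw [Real.norm_eq_abs, abs_mul, abs_div, abs_of_pos (hD u),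
      abs_of_nonneg (by linarith [neg_one_le_cos u])]
    calc (1 + cos u) / poissonDenom ε u * |g u| ≤ 2 / poissonDenom ε u * B :=
          mul_le_mul (div_le_div_of_nonneg_right (by linarith [cos_le_one u]) (hD u).le)
            (hg u (Set.Ioc_subset_Icc_self hu)) (abs_nonneg _) (div_nonneg zero_le_two (hD u).le)
      _ = 2 * B * (poissonDenom ε u)⁻¹ := by ring
  have hinv : Continuous fun u => (poissonDenom ε u)⁻¹ :=
    (continuous_poissonDenom ε).inv₀ fun u => (hD u).ne'
  have := intervalIntegral.norm_integral_le_of_norm_le (by linarith [pi_pos])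
    (Filter.Eventually.of_forall hbound)
    ((continuous_const.mul hinv).intervalIntegrable (μ := volume) _ _)
  rw [intervalIntegral.integral_const_mul, integral_inv_poissonDenom hε] at this
  rwa [← Real.norm_eq_abs, mul_div_assoc]

theorem stmt_16_general (μ : ℝ → ℝ) (hμ : ContDiff ℝ 2 μ)
    (hper : Function.Periodic μ (2 * π)) (E : ℝ → ℝ → ℝ)
    (hE_ne : ∀ x t, Real.cos t ≠ 1 →
      E x t = (μ (x + t) - 2 * μ x + μ (x - t)) / (2 * (1 - Real.cos t))) :
    ∀ c : ℝ, 0 < c → ∃ ε₀ : ℝ, 0 < ε₀ ∧ ∀ ε : ℝ, 0 < ε → ε < ε₀ → ∀ s : ℝ,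
      |(∫ t in (0:ℝ)..(2 * π),
          (-(1 / (2 * π)) * ε / (1 + ε ^ 2 + (1 - ε ^ 2) * Real.cos (s + t))) * μ t)
        - (-(1 / 2) * μ (π - s)
            - ε / (2 * π) * ∫ t in (-π)..π, E (π - s) t)| ≤ c * ε := by
  have hμ₁ : Differentiable ℝ μ := hμ.differentiable two_ne_zero
  have hμ₂ : Differentiable ℝ (deriv μ) := hμ.differentiable_deriv_two
  obtain ⟨C, hC⟩ : ∃ C, ∀ y, |deriv (deriv μ) y| ≤ C := by
    have hμ'' : Continuous (deriv (deriv μ)) := (ContDiff.deriv' (n := 1) hμ).continuous_deriv_one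
    obtain ⟨C, hC⟩ := isBounded_iff_forall_norm_le.mp
      (hper.deriv.deriv.isBounded_of_continuous two_pi_pos.ne' hμ'')
    exact ⟨C, fun y => hC _ (Set.mem_range_self y)⟩
  have hM : 0 ≤ C * π ^ 2 / 2 := by have := (abs_nonneg _).trans (hC 0); positivity
  intro c hc
  refine ⟨c / (C * π ^ 2 / 2 + 1), by positivity, fun ε hε hεc s => ?_⟩
  have hE : ∫ t in (-π)..π, E (π - s) t = ∫ t in (-π)..π, secondDiffQuot μ (π - s) t :=
    intervalIntegral_congr_of_cos_ne_one (hE_ne (π - s)) _ _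
  have hR := abs_integral_one_add_cos_div_poissonDenom_mul_le hε
    fun u hu => abs_secondDiffQuot_le hμ₁ hμ₂ hC (π - s) (abs_le.mpr hu)
  rw [integral_laplaceKernel_mul_eq hper, integral_div_poissonDenom_eq hμ₁.continuous hε
    (π - s) (intervalIntegrable_secondDiffQuot hμ₁ hμ₂ hC _), hE]
  set R := ∫ u in (-π)..π, (1 + cos u) / poissonDenom ε u * secondDiffQuot μ (π - s) u
  calc _ = ε ^ 3 / (2 * π) * |R| := by
        rw [← abs_of_pos (by positivity : 0 < ε ^ 3 / (2 * π)), ← abs_mul]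
        congr 1
        field_simp
        ring
    _ ≤ ε ^ 3 / (2 * π) * (2 * (C * π ^ 2 / 2) * π / ε) := by gcongr
    _ = C * π ^ 2 / 2 * ε * ε := by field_simp
    _ ≤ c * ε := by
        gcongr
        rw [lt_div_iff₀ (by positivity)] at hεc
        nlinarith

/-- Lemma 3.2 (asymptotic expansion of the Laplace double-layer operator):
for `μ ∈ C²(𝕋)`,
`∫₀^{2π} K^L(s,t;ε) μ(t) dt = -(1/2) μ(π-s) - (ε/(2π)) ∫_{-π}^{π} E_{π-s}[μ](t) dt + o(ε)`
as `ε → 0⁺`, uniformly in `s`. -/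
theorem stmt_16 (μ : ℝ → ℝ) (hμ : ContDiff ℝ 2 μ)
    (hper : Function.Periodic μ (2 * π)) (E : ℝ → ℝ → ℝ)
    (hE_ne : ∀ x t, Real.cos t ≠ 1 →
      E x t = (μ (x + t) - 2 * μ x + μ (x - t)) / (2 * (1 - Real.cos t)))
    (hE_eq : ∀ x t, Real.cos t = 1 → E x t = deriv (deriv μ) x) :
    ∀ c : ℝ, 0 < c → ∃ ε₀ : ℝ, 0 < ε₀ ∧ ∀ ε : ℝ, 0 < ε → ε < ε₀ → ∀ s : ℝ,
      |(∫ t in (0:ℝ)..(2 * π),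
          (-(1 / (2 * π)) * ε / (1 + ε ^ 2 + (1 - ε ^ 2) * Real.cos (s + t))) * μ t)
        - (-(1 / 2) * μ (π - s)
            - ε / (2 * π) * ∫ t in (-π)..π, E (π - s) t)| ≤ c * ε :=
  stmt_16_general μ hμ hper E hE_ne
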